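/- With notation as above (d^0 ∘ d^{-1} = 0), the image of the projector Π := A_0̂ B^0 = (1/|V|) Σ_{α∈V} P^{d^{-1}α} ∘ (projection onto span{|ν⟩ : d^0 ν = 0}) has dimension equal to |ker(d^0)/im(d^{-1})|, i.e. the ground state degeneracy equals the order of the cohomology group H^0 = ker(d^0)/im(d^{-1}). -/

import Mathlib

variable {V W U : Type*} [AddCommGroup V] [Fintype V] [DecidableEq V]
  [AddCommGroup W] [Fintype W] [DecidableEq W]
  [AddCommGroup U] [Fintype U] [DecidableEq U]

/-- The shift operator `P^w : |ω⟩ ↦ |ω + w⟩` on `ℂ[W]`. -/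
noncomputable def shiftOp (w : W) : EuclideanSpace ℂ W →ₗ[ℂ] EuclideanSpace ℂ W :=
  (EuclideanSpace.equiv W ℂ).symm.toLinearMap ∘ₗ
    (LinearMap.funLeft ℂ ℂ (fun x => x - w)) ∘ₗ (EuclideanSpace.equiv W ℂ).toLinearMap

/-- The trivial fake-gauge operator `A_0̂ := (1/|V|) Σ_{α∈V} P^{d⁻¹ α}`. -/
noncomputable def gaugeOp0 (d : V →+ W) :
    EuclideanSpace ℂ W →ₗ[ℂ] EuclideanSpace ℂ W :=
  (Fintype.card V : ℂ)⁻¹ • ∑ α : V, shiftOp (d α)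

/-- The trivial fake-holonomy operator `B^0`: the orthogonal projection onto
`span{|ν⟩ : d⁰ ν = 0}`, given on functions by restriction to `ker d⁰`. -/
noncomputable def holOp0 (d : W →+ U) :
    EuclideanSpace ℂ W →ₗ[ℂ] EuclideanSpace ℂ W :=
  (EuclideanSpace.equiv W ℂ).symm.toLinearMap ∘ₗ
    { toFun := fun f ν => if d ν = 0 then f ν else 0
      map_add' := by intro f g; funext ν; by_cases h : d ν = 0 <;> simp [h]
      map_smul' := by intro c f; funext ν; by_cases h : d ν = 0 <;> simp [h] } ∘ₗ
    (EuclideanSpace.equiv W ℂ).toLinearMap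

lemma pi_apply (dm1 : V →+ W) (d0 : W →+ U) (f : EuclideanSpace ℂ W) (ω : W) :
    ((gaugeOp0 dm1).comp (holOp0 d0)) f ω =
      (Fintype.card V : ℂ)⁻¹ *
        ∑ α : V, (if d0 (ω - dm1 α) = 0 then f (ω - dm1 α) else 0) := by
  simp only [gaugeOp0, holOp0, shiftOp, LinearMap.comp_apply, LinearMap.smul_apply,
    LinearMap.sum_apply, LinearMap.coe_mk, AddHom.coe_mk, LinearEquiv.coe_coe,
    LinearMap.funLeft_apply,
    smul_eq_mul, PiLp.smul_apply]
  congr 1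
  rw [WithLp.ofLp_sum, Finset.sum_apply]
  rfl

/-- The rank of the ground-state projector `Π = A_0̂ B^0` equals the
order of the cohomology group `H⁰ = ker(d⁰)/im(d⁻¹)`: the ground state degeneracy is
`|ker(d⁰)/im(d⁻¹)|`. -/
theorem stmt9 (dm1 : V →+ W) (d0 : W →+ U) (hdd : d0.comp dm1 = 0) :
    Module.finrank ℂ (LinearMap.range ((gaugeOp0 dm1).comp (holOp0 d0))) =
      Nat.card (d0.ker ⧸ (dm1.range.addSubgroupOf d0.ker)) := by
  classical
  set Pi0 := (gaugeOp0 dm1).comp (holOp0 d0) with hPi0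
  set I : AddSubgroup d0.ker := dm1.range.addSubgroupOf d0.ker with hI
  set Q := d0.ker ⧸ I with hQ
  have hdd' : ∀ α : V, d0 (dm1 α) = 0 := fun α => DFunLike.congr_fun hdd α
  haveI : Fintype Q := Fintype.ofFinite Q
  -- the comparison map
  let L : (Q → ℂ) →ₗ[ℂ] EuclideanSpace ℂ W :=
    { toFun := fun g => WithLp.toLp 2 (fun ω => if h : d0 ω = 0 then g (QuotientAddGroup.mk ⟨ω, h⟩) else 0)
      map_add' := by intro f g; ext ω; by_cases h : d0 ω = 0 <;> simp [h]
      map_smul' := by intro c f; ext ω; by_cases h : d0 ω = 0 <;> simp [h] }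
  have hLapp : ∀ (g : Q → ℂ) (ω : W),
      L g ω = if h : d0 ω = 0 then g (QuotientAddGroup.mk ⟨ω, h⟩) else 0 := fun _ _ => rfl
  have hcard : (Fintype.card V : ℂ) ≠ 0 := by
    exact_mod_cast Fintype.card_ne_zero
  -- L is injective
  have hLinj : Function.Injective L := by
    intro g₁ g₂ hg
    funext c
    have h1 := congrArg (fun f : EuclideanSpace ℂ W => f (c.out : W)) hg
    have hmem : d0 (c.out : W) = 0 := c.out.2
    simp only [hLapp, dif_pos hmem] at h1
    have e : (QuotientAddGroup.mk (⟨(c.out : W), hmem⟩ : d0.ker) : Q) = c := Quotient.out_eq c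
    rwa [e] at h1
  -- range Π = range L
  have hrange : LinearMap.range Pi0 = LinearMap.range L := by
    apply le_antisymm
    · rintro _ ⟨f, rfl⟩
      refine ⟨fun c => (Fintype.card V : ℂ)⁻¹ * ∑ α : V, f ((c.out : W) - dm1 α), ?_⟩
      ext ω
      rw [hLapp, pi_apply]
      by_cases h : d0 ω = 0
      · simp only [h, dif_pos]
        congr 1
        obtain ⟨⟨b, hb⟩, hbeq⟩ := QuotientAddGroup.mk_out_eq_mul I (⟨ω, h⟩ : d0.ker)
        rw [hI, AddSubgroup.mem_addSubgroupOf] at hb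
        obtain ⟨β, hβ⟩ := hb
        have hout : ((QuotientAddGroup.mk (⟨ω, h⟩ : d0.ker) : Q).out : W) = ω + dm1 β := by
          rw [hbeq]; simp [hβ]
        rw [hout]
        refine Fintype.sum_equiv (Equiv.subRight β) _ _ (fun α => ?_)
        have harg : ω + dm1 β - dm1 α = ω - dm1 (α - β) := by
          rw [map_sub]; abel
        simp only [Equiv.subRight_apply, map_sub, hdd', h, sub_zero, if_pos]
        exact congrArg f (harg.trans (by rw [map_sub]))
      · simp [h, hdd']
    · rintro _ ⟨g, rfl⟩
      refine ⟨L g, ?_⟩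
      ext ω
      rw [pi_apply, hLapp]
      by_cases h : d0 ω = 0
      · simp only [h, dif_pos]
        have hterm : ∀ α : V, (if d0 (ω - dm1 α) = 0 then L g (ω - dm1 α) else 0)
            = g (QuotientAddGroup.mk (⟨ω, h⟩ : d0.ker)) := by
          intro α
          have hk : d0 (ω - dm1 α) = 0 := by simp [map_sub, hdd', h]
          rw [if_pos hk, hLapp, dif_pos hk]
          congr 1
          apply QuotientAddGroup.eq.mpr
          rw [hI, AddSubgroup.mem_addSubgroupOf]
          refine ⟨α, ?_⟩
          push_cast
          abel
        simp only [hterm, Finset.sum_const, Finset.card_univ, nsmul_eq_mul]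
        rw [← mul_assoc, inv_mul_cancel₀ hcard, one_mul]
      · simp [h, hdd']
  rw [hrange, LinearMap.finrank_range_of_inj hLinj, Module.finrank_pi,
    Nat.card_eq_fintype_card]
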